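/- arXiv:2401.17961 — 4 statements merged into one kernel-verified Lean document; each statement's English description precedes it below -/
import Mathlib

section
/- The triangular family is differentiable in quadratic mean: for every θ ∈ (0,1), defining the score function ℓ̇_θ(y) = −1/θ for y ∈ (0,θ] and ℓ̇_θ(y) = 1/(1−θ) for y ∈ (θ,1), one has ∫₀¹ ( √(f(y, θ+h)) − √(f(y, θ)) − (1/2)·h·ℓ̇_θ(y)·√(f(y, θ)) )² dy = o(h²) as h → 0. -/
/-!
For `y ≤ min θ (θ + h)` the remainder is `√(2y)` times the first-order Taylor remainder of
`t ↦ t^(-1/2)` at `θ`, and for `y > max θ (θ + h)` it is `√(2 - 2y)` times that of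
`t ↦ (1 - t)^(-1/2)`; both Taylor remainders are `o(h)`. On the strip between `θ` and `θ + h`,
of width `|h|`, both densities are within `O(h)` of their common peak value `2`, so the remainder
is `O(h)` there and the strip contributes only `O(|h|³)`.
-/

open MeasureTheory Set

/-- Density of the triangular distribution on (0,1) with parameter θ. -/
noncomputable def triDensity (θ y : ℝ) : ℝ :=
  Set.indicator (Set.Ioc 0 θ) (fun y => 2 * y / θ) y
    + Set.indicator (Set.Ioo θ 1) (fun y => (2 - 2 * y) / (1 - θ)) y

/-- Score function of the triangular family. -/
noncomputable def triScore (θ y : ℝ) : ℝ :=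
  if y ≤ θ then -1 / θ else 1 / (1 - θ)

open Filter Topology Asymptotics

lemma Real.abs_sqrt_sub_sqrt_le {u v : ℝ} (hu : 0 ≤ u) (hv : 0 < v) :
    |√u - √v| ≤ |u - v| / √v := by
  have hsv : 0 < √v := Real.sqrt_pos.2 hv
  rw [le_div_iff₀ hsv]
  calc |√u - √v| * √v ≤ |√u - √v| * (√u + √v) := by gcongr; linarith [Real.sqrt_nonneg u]
    _ = |u - v| := by
      rw [← abs_of_pos (by positivity : 0 < √u + √v), ← abs_mul]
      congr 1
      linear_combination Real.sq_sqrt hu - Real.sq_sqrt hv.le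

def linRemainder (g : ℝ → ℝ) (x g' h : ℝ) : ℝ := g (x + h) - g x - h * g'

lemma HasDerivAt.isLittleO_linRemainder_sq {g : ℝ → ℝ} {g' x : ℝ} (hg : HasDerivAt g g' x) :
    (fun h => linRemainder g x g' h ^ 2) =o[𝓝 0] (fun h => h ^ 2) :=
  (hasDerivAt_iff_isLittleO_nhds_zero.1 hg).pow two_pos

lemma hasDerivAt_inv_sqrt {x : ℝ} (hx : 0 < x) :
    HasDerivAt (fun t => (√t)⁻¹) (-(2 * x * √x)⁻¹) x := by
  have hs : √x ≠ 0 := (Real.sqrt_pos.2 hx).ne'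
  refine ((Real.hasDerivAt_sqrt hx.ne').inv hs).congr_deriv ?_
  rw [Real.sq_sqrt hx.le]
  field_simp

lemma hasDerivAt_inv_sqrt_one_sub {x : ℝ} (hx : x < 1) :
    HasDerivAt (fun t => (√(1 - t))⁻¹) ((2 * (1 - x) * √(1 - x))⁻¹) x :=
  ((hasDerivAt_inv_sqrt (sub_pos.2 hx)).comp x ((hasDerivAt_id x).const_sub 1)).congr_deriv
    (by ring)

lemma isLittleO_mul_abs_mul_sq (c : ℝ) :
    (fun h : ℝ => c * |h| * h ^ 2) =o[𝓝 0] (fun h => h ^ 2) := by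
  have : (fun h : ℝ => c * |h|) =o[𝓝 0] (fun _ => (1 : ℝ)) := by
    rw [isLittleO_one_iff]
    simpa using (continuous_abs.const_mul c).tendsto 0
  simpa using this.mul_isBigO (isBigO_refl (fun h : ℝ => h ^ 2) _)

lemma triDensity_of_le {t y : ℝ} (hy : 0 ≤ y) (hyt : y ≤ t) : triDensity t y = 2 * y / t := by
  rcases hy.eq_or_lt with rfl | hy
  · simp [triDensity, not_lt.2 hyt]
  · simp [triDensity, indicator_of_mem (show y ∈ Ioc 0 t from ⟨hy, hyt⟩), not_lt.2 hyt]

lemma triDensity_of_lt {t y : ℝ} (hty : t < y) (hy : y ≤ 1) :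
    triDensity t y = (2 - 2 * y) / (1 - t) := by
  rcases hy.eq_or_lt with rfl | hy
  · simp [triDensity, not_le.2 hty]
  · simp [triDensity, indicator_of_mem (show y ∈ Ioo t 1 from ⟨hty, hy⟩), not_le.2 hty]

lemma sqrt_triDensity_of_le {t y : ℝ} (hy : 0 ≤ y) (hyt : y ≤ t) :
    √(triDensity t y) = √(2 * y) * (√t)⁻¹ := by
  rw [triDensity_of_le hy hyt, Real.sqrt_div (by linarith), div_eq_mul_inv]

lemma sqrt_triDensity_of_lt {t y : ℝ} (hty : t < y) (hy : y ≤ 1) :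
    √(triDensity t y) = √(2 - 2 * y) * (√(1 - t))⁻¹ := by
  rw [triDensity_of_lt hty hy, Real.sqrt_div (by linarith), div_eq_mul_inv]

lemma triDensity_nonneg {t : ℝ} (ht : t ∈ Ioo 0 1) (y : ℝ) : 0 ≤ triDensity t y := by
  obtain ⟨ht0, ht1⟩ := ht
  refine add_nonneg (indicator_nonneg (fun x hx => ?_) _) (indicator_nonneg (fun x hx => ?_) _)
  · exact div_nonneg (by linarith [hx.1]) ht0.le
  · exact div_nonneg (by linarith [hx.2]) (by linarith)

lemma triDensity_le_two {t : ℝ} (ht : t ∈ Ioo 0 1) (y : ℝ) : triDensity t y ≤ 2 := by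
  obtain ⟨ht0, ht1⟩ := ht
  by_cases hy : y ∈ Icc 0 1
  · rcases le_or_gt y t with hyt | hty
    · rw [triDensity_of_le hy.1 hyt, div_le_iff₀ ht0]; linarith
    · rw [triDensity_of_lt hty hy.2, div_le_iff₀ (by linarith)]; linarith
  · have h1 : y ∉ Ioc 0 t := fun h => hy ⟨h.1.le, h.2.trans ht1.le⟩
    have h2 : y ∉ Ioo t 1 := fun h => hy ⟨ht0.le.trans h.1.le, h.2.le⟩
    simp [triDensity, indicator_of_notMem h1, indicator_of_notMem h2]

lemma abs_triDensity_sub_two_le {t y : ℝ} (ht : t ∈ Ioo 0 1) (hy : y ∈ Icc 0 1) :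
    |triDensity t y - 2| ≤ 2 * |y - t| / min t (1 - t) := by
  obtain ⟨ht0, ht1⟩ := ht
  have hm : 0 < min t (1 - t) := lt_min ht0 (by linarith)
  rcases le_or_gt y t with hyt | hty
  · have : triDensity t y - 2 = 2 * (y - t) / t := by
      rw [triDensity_of_le hy.1 hyt]; field_simp
    rw [this, abs_div, abs_mul, abs_two, abs_of_pos ht0]
    exact div_le_div_of_nonneg_left (by positivity) hm (min_le_left _ _)
  · have : triDensity t y - 2 = -(2 * (y - t) / (1 - t)) := by
      rw [triDensity_of_lt hty hy.2]; field_simp; ring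
    rw [this, abs_neg, abs_div, abs_mul, abs_two, abs_of_pos (by linarith : 0 < 1 - t)]
    exact div_le_div_of_nonneg_left (by positivity) hm (min_le_right _ _)

lemma abs_triScore_le {t : ℝ} (ht : t ∈ Ioo 0 1) (y : ℝ) : |triScore t y| ≤ (min t (1 - t))⁻¹ := by
  obtain ⟨ht0, ht1⟩ := ht
  have hm : 0 < min t (1 - t) := lt_min ht0 (by linarith)
  unfold triScore
  split_ifs
  · rw [neg_div, abs_neg, one_div, abs_inv, abs_of_pos ht0]
    exact inv_anti₀ hm (min_le_left _ _)
  · rw [one_div, abs_inv, abs_of_pos (by linarith : 0 < 1 - t)]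
    exact inv_anti₀ hm (min_le_right _ _)

lemma abs_sqrt_triDensity_sub_sqrt_two_le {t y : ℝ} (ht : t ∈ Ioo 0 1) (hy : y ∈ Icc 0 1) :
    |√(triDensity t y) - √2| ≤ 2 * |y - t| / min t (1 - t) :=
  calc |√(triDensity t y) - √2| ≤ |triDensity t y - 2| / √2 :=
        Real.abs_sqrt_sub_sqrt_le (triDensity_nonneg ht y) two_pos
    _ ≤ |triDensity t y - 2| := div_le_self (abs_nonneg _) Real.one_lt_sqrt_two.le
    _ ≤ 2 * |y - t| / min t (1 - t) := abs_triDensity_sub_two_le ht hy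

noncomputable def triRemainder (θ h y : ℝ) : ℝ :=
  √(triDensity (θ + h) y) - √(triDensity θ y) - (1 / 2) * h * triScore θ y * √(triDensity θ y)

lemma triRemainder_of_le {θ h y : ℝ} (hθ : 0 < θ) (hy : 0 ≤ y) (hyθ : y ≤ θ) (hyθh : y ≤ θ + h) :
    triRemainder θ h y = √(2 * y) * linRemainder (fun t => (√t)⁻¹) θ (-(2 * θ * √θ)⁻¹) h := by
  have hs : √θ ≠ 0 := (Real.sqrt_pos.2 hθ).ne'
  rw [triRemainder, linRemainder, sqrt_triDensity_of_le hy hyθh, sqrt_triDensity_of_le hy hyθ,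
    triScore, if_pos hyθ]
  field_simp

lemma triRemainder_of_lt {θ h y : ℝ} (hθ : θ < 1) (hθy : θ < y) (hθhy : θ + h < y) (hy : y ≤ 1) :
    triRemainder θ h y =
      √(2 - 2 * y) * linRemainder (fun t => (√(1 - t))⁻¹) θ ((2 * (1 - θ) * √(1 - θ))⁻¹) h := by
  have hθ' : 1 - θ ≠ 0 := (sub_pos.2 hθ).ne'
  have hs : √(1 - θ) ≠ 0 := (Real.sqrt_pos.2 (sub_pos.2 hθ)).ne'
  rw [triRemainder, linRemainder, sqrt_triDensity_of_lt hθhy hy, sqrt_triDensity_of_lt hθy hy,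
    triScore, if_neg (not_le.2 hθy)]
  field_simp

lemma abs_triRemainder_le_of_abs_sub_le {θ h y : ℝ} (hθ : θ ∈ Ioo 0 1)
    (hh : |h| ≤ min θ (1 - θ) / 2) (hy : y ∈ Icc 0 1) (hyθ : |y - θ| ≤ |h|) :
    |triRemainder θ h y| ≤ 11 * |h| / min θ (1 - θ) := by
  set m := min θ (1 - θ)
  have hm : 0 < m := lt_min hθ.1 (sub_pos.2 hθ.2)
  obtain ⟨hh₁, hh₂⟩ := abs_le.1 hh
  have hmθ : m ≤ θ := min_le_left _ _
  have hmθ' : m ≤ 1 - θ := min_le_right _ _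
  have hθh : θ + h ∈ Ioo 0 1 := ⟨by linarith, by linarith⟩
  have hmh : m / 2 ≤ min (θ + h) (1 - (θ + h)) := le_min (by linarith) (by linarith)
  have hshift : 2 * |y - (θ + h)| / min (θ + h) (1 - (θ + h)) ≤ 8 * |h| / m := by
    have : |y - (θ + h)| ≤ 2 * |h| := by
      calc |y - (θ + h)| = |(y - θ) - h| := by ring_nf
        _ ≤ |y - θ| + |h| := abs_sub _ _
        _ ≤ 2 * |h| := by linarith
    calc 2 * |y - (θ + h)| / min (θ + h) (1 - (θ + h)) ≤ 2 * (2 * |h|) / (m / 2) := by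
          gcongr
      _ = 8 * |h| / m := by ring
  have hmove := (abs_sqrt_triDensity_sub_sqrt_two_le hθh hy).trans hshift
  have hbase : |√(triDensity θ y) - √2| ≤ 2 * |h| / m :=
    (abs_sqrt_triDensity_sub_sqrt_two_le hθ hy).trans (by gcongr)
  have hscore : |(1 / 2) * h * triScore θ y * √(triDensity θ y)| ≤ |h| / m := by
    have hsqrt : √(triDensity θ y) ≤ 2 :=
      Real.sqrt_le_iff.2 ⟨zero_le_two, by linarith [triDensity_le_two hθ y]⟩
    rw [abs_mul, abs_mul, abs_mul, abs_of_pos one_half_pos, abs_of_nonneg (Real.sqrt_nonneg _)]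
    calc 1 / 2 * |h| * |triScore θ y| * √(triDensity θ y) ≤ 1 / 2 * |h| * m⁻¹ * 2 := by
          gcongr
          exact abs_triScore_le hθ y
      _ = |h| / m := by ring
  calc |triRemainder θ h y|
      = |(√(triDensity (θ + h) y) - √2) - (√(triDensity θ y) - √2)
          - (1 / 2) * h * triScore θ y * √(triDensity θ y)| := by rw [triRemainder]; ring_nf
    _ ≤ |√(triDensity (θ + h) y) - √2| + |√(triDensity θ y) - √2|
          + |(1 / 2) * h * triScore θ y * √(triDensity θ y)| :=
        (abs_sub _ _).trans (by gcongr; exact abs_sub _ _)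
    _ ≤ 8 * |h| / m + 2 * |h| / m + |h| / m := by gcongr
    _ = 11 * |h| / m := by ring

lemma triRemainder_sq_le {θ h y : ℝ} (hθ : θ ∈ Ioo 0 1) (hh : |h| ≤ min θ (1 - θ) / 2)
    (hy : y ∈ Icc 0 1) :
    triRemainder θ h y ^ 2 ≤
      2 * linRemainder (fun t => (√t)⁻¹) θ (-(2 * θ * √θ)⁻¹) h ^ 2
        + 2 * linRemainder (fun t => (√(1 - t))⁻¹) θ ((2 * (1 - θ) * √(1 - θ))⁻¹) h ^ 2
        + (Icc (θ - |h|) (θ + |h|)).indicator (fun _ => (11 * |h| / min θ (1 - θ)) ^ 2) y := by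
  set L := linRemainder (fun t => (√t)⁻¹) θ (-(2 * θ * √θ)⁻¹) h
  set R := linRemainder (fun t => (√(1 - t))⁻¹) θ ((2 * (1 - θ) * √(1 - θ))⁻¹) h
  have hL := sq_nonneg L
  have hR := sq_nonneg R
  have hI : 0 ≤ (Icc (θ - |h|) (θ + |h|)).indicator (fun _ => (11 * |h| / min θ (1 - θ)) ^ 2) y :=
    indicator_nonneg (fun _ _ => sq_nonneg _) _
  by_cases hleft : y ≤ θ ∧ y ≤ θ + h
  · have h2y : 2 * y ≤ 2 := by linarith [hy.2]
    rw [triRemainder_of_le hθ.1 hy.1 hleft.1 hleft.2, mul_pow, Real.sq_sqrt (by linarith [hy.1])]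
    nlinarith
  by_cases hright : θ < y ∧ θ + h < y
  · have h2y : 2 - 2 * y ≤ 2 := by linarith [hy.1]
    rw [triRemainder_of_lt hθ.2 hright.1 hright.2 hy.2, mul_pow, Real.sq_sqrt (by linarith [hy.2])]
    nlinarith
  have hnear : |y - θ| ≤ |h| := by
    rw [abs_le]
    rcases le_or_gt y θ with hyθ | hyθ
    · have : θ + h < y := not_le.1 fun h' => hleft ⟨hyθ, h'⟩
      constructor <;> linarith [neg_abs_le h, abs_nonneg h]
    · have : y ≤ θ + h := not_lt.1 fun h' => hright ⟨hyθ, h'⟩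
      constructor <;> linarith [le_abs_self h, abs_nonneg h]
  have hmem : y ∈ Icc (θ - |h|) (θ + |h|) := by
    rw [abs_le] at hnear
    exact ⟨by linarith [hnear.1], by linarith [hnear.2]⟩
  rw [indicator_of_mem hmem, ← sq_abs]
  have := pow_le_pow_left₀ (abs_nonneg _) (abs_triRemainder_le_of_abs_sub_le hθ hh hy hnear) 2
  linarith

lemma integral_triRemainder_sq_le {θ h : ℝ} (hθ : θ ∈ Ioo 0 1) (hh : |h| ≤ min θ (1 - θ) / 2) :
    ∫ y in (0 : ℝ)..1, triRemainder θ h y ^ 2 ≤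
      2 * linRemainder (fun t => (√t)⁻¹) θ (-(2 * θ * √θ)⁻¹) h ^ 2
        + 2 * linRemainder (fun t => (√(1 - t))⁻¹) θ ((2 * (1 - θ) * √(1 - θ))⁻¹) h ^ 2
        + 2 * |h| * (11 * |h| / min θ (1 - θ)) ^ 2 := by
  set a := 2 * linRemainder (fun t => (√t)⁻¹) θ (-(2 * θ * √θ)⁻¹) h ^ 2
        + 2 * linRemainder (fun t => (√(1 - t))⁻¹) θ ((2 * (1 - θ) * √(1 - θ))⁻¹) h ^ 2
  set c := (11 * |h| / min θ (1 - θ)) ^ 2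
  set I := Icc (θ - |h|) (θ + |h|)
  have hIvol : volume.real (I ∩ Ioc 0 1) ≤ 2 * |h| :=
    (measureReal_mono inter_subset_left measure_Icc_lt_top.ne).trans
      (by rw [Real.volume_real_Icc_of_le (by linarith [abs_nonneg h])]; linarith)
  rw [intervalIntegral.integral_of_le zero_le_one]
  calc ∫ y in Ioc 0 1, triRemainder θ h y ^ 2 ≤ ∫ y in Ioc 0 1, (a + I.indicator (fun _ => c) y) :=
        integral_mono_of_nonneg (ae_of_all _ fun _ => sq_nonneg _)
          ((integrable_const a).add ((integrable_const c).indicator measurableSet_Icc))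
          (ae_restrict_of_forall_mem measurableSet_Ioc
            fun y hy => triRemainder_sq_le hθ hh (Ioc_subset_Icc_self hy))
    _ = a + volume.real (I ∩ Ioc 0 1) * c := by
        rw [integral_add (integrable_const a) ((integrable_const c).indicator measurableSet_Icc),
          integral_const, integral_indicator_const _ measurableSet_Icc,
          measureReal_restrict_apply measurableSet_Icc, measureReal_restrict_apply_univ,
          Real.volume_real_Ioc_of_le zero_le_one, sub_zero,
          smul_eq_mul, smul_eq_mul, one_mul]
    _ ≤ a + 2 * |h| * c := by gcongr

/-- The triangular family is differentiable in quadratic mean: the quadratic-mean Taylor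
remainder is `o(h²)` as `h → 0`. -/
theorem triangular_dqm (θ : ℝ) (hθ : θ ∈ Set.Ioo (0 : ℝ) 1) :
    (fun h : ℝ => ∫ y in (0 : ℝ)..1,
        (Real.sqrt (triDensity (θ + h) y) - Real.sqrt (triDensity θ y)
          - (1 / 2) * h * triScore θ y * Real.sqrt (triDensity θ y)) ^ 2)
      =o[nhds (0 : ℝ)] (fun h : ℝ => h ^ 2) := by
  set m := min θ (1 - θ)
  have hm : 0 < m / 2 := half_pos (lt_min hθ.1 (sub_pos.2 hθ.2))
  have hbound : (fun h : ℝ => 2 * linRemainder (fun t => (√t)⁻¹) θ (-(2 * θ * √θ)⁻¹) h ^ 2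
        + 2 * linRemainder (fun t => (√(1 - t))⁻¹) θ ((2 * (1 - θ) * √(1 - θ))⁻¹) h ^ 2
        + 2 * |h| * (11 * |h| / m) ^ 2) =o[𝓝 0] (fun h => h ^ 2) := by
    refine (((hasDerivAt_inv_sqrt hθ.1).isLittleO_linRemainder_sq.const_mul_left 2).add
      ((hasDerivAt_inv_sqrt_one_sub hθ.2).isLittleO_linRemainder_sq.const_mul_left 2)).add ?_
    refine (isLittleO_mul_abs_mul_sq (2 * (11 / m) ^ 2)).congr_left fun h => ?_
    rw [← sq_abs h]
    ring
  refine (IsBigO.of_bound' ?_).trans_isLittleO hbound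
  filter_upwards [Metric.closedBall_mem_nhds (0 : ℝ) hm] with h hh
  rw [Metric.mem_closedBall, Real.dist_eq, sub_zero] at hh
  rw [Real.norm_of_nonneg (intervalIntegral.integral_nonneg zero_le_one fun _ _ => sq_nonneg _)]
  exact (integral_triRemainder_sq_le hθ hh).trans (le_abs_self _)
end

section
/- For fixed y ∈ (0,1) and u ∈ (0,1), the equation G(u,θ) = y in θ ∈ (0,1) has the following solution set: if u < y², there is no solution; if y² ≤ u < y, the unique solution is θ = y²/u; if y ≤ u ≤ 1 − (1−y)², the unique solution is θ = 1 − (1−y)²/(1−u); and if u > 1 − (1−y)², there is no solution. -/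
/-!
On the branch `u ≤ θ` the equation `G(u,θ) = y` reads `uθ = y²`, whose root `θ = y²/u` lies on
that branch exactly when `u ≤ y`; on the branch `θ < u` it reads `(1-u)(1-θ) = (1-y)²`, whose
root `θ = 1 - (1-y)²/(1-u)` lies on that branch exactly when `y < u`. Which of these two roots
falls into `(0,1)` is then a comparison of `u` with `y²`, `y` and `1 - (1-y)²`.
-/

open Set

/-- Data generating algorithm for the triangular distribution. -/
noncomputable def triDGA (u θ : ℝ) : ℝ :=
  if u ≤ θ then Real.sqrt (u * θ) else 1 - Real.sqrt ((1 - u) * (1 - θ))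

section

variable {u θ y : ℝ}

theorem triDGA_eq_iff_of_le (hu : 0 < u) (hy : 0 ≤ y) (h : u ≤ θ) :
    triDGA u θ = y ↔ u * θ = y ^ 2 := by
  rw [triDGA, if_pos h, Real.sqrt_eq_iff_eq_sq (by nlinarith) hy]

theorem triDGA_eq_iff_of_lt (hu : u < 1) (hy : y ≤ 1) (h : θ < u) :
    triDGA u θ = y ↔ (1 - u) * (1 - θ) = (1 - y) ^ 2 := by
  rw [triDGA, if_neg h.not_ge, sub_eq_iff_eq_add, ← sub_eq_iff_eq_add', eq_comm,
    Real.sqrt_eq_iff_eq_sq (by nlinarith) (by linarith)]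

theorem triDGA_eq_iff (hu0 : 0 < u) (hu1 : u < 1) (hy0 : 0 ≤ y) (hy1 : y ≤ 1) :
    triDGA u θ = y ↔
      (u ≤ y ∧ θ = y ^ 2 / u) ∨ (y < u ∧ θ = 1 - (1 - y) ^ 2 / (1 - u)) := by
  have hu1' : 0 < 1 - u := by linarith
  constructor
  · intro hG
    rcases le_or_gt u θ with h | h
    · have hprod := (triDGA_eq_iff_of_le hu0 hy0 h).1 hG
      refine Or.inl ⟨by nlinarith, ?_⟩
      rw [eq_div_iff hu0.ne']
      linarith
    · have hprod := (triDGA_eq_iff_of_lt hu1 hy1 h).1 hG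
      refine Or.inr ⟨by nlinarith, ?_⟩
      rw [eq_sub_iff_add_eq, ← eq_sub_iff_add_eq', div_eq_iff hu1'.ne']
      linarith
  · rintro (⟨h, rfl⟩ | ⟨h, rfl⟩)
    · rw [triDGA_eq_iff_of_le hu0 hy0 (by rw [le_div_iff₀ hu0]; nlinarith)]
      field_simp
    · rw [triDGA_eq_iff_of_lt hu1 hy1 (by rw [sub_lt_comm, lt_div_iff₀ hu1']; nlinarith)]
      field_simp
      ring

end

/-- Solution set of the equation `G(u,θ) = y` in `θ ∈ (0,1)`, for fixed
`y, u ∈ (0,1)`: no solution if `u < y²`; the unique solution `θ = y²/u` if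
`y² ≤ u < y`; the unique solution `θ = 1 - (1-y)²/(1-u)` if `y ≤ u ≤ 1-(1-y)²`;
and no solution if `u > 1-(1-y)²`. -/
theorem triangular_dga_inverse (y u : ℝ) (hy : y ∈ Set.Ioo (0 : ℝ) 1)
    (hu : u ∈ Set.Ioo (0 : ℝ) 1) :
    (u < y ^ 2 → ¬ ∃ θ ∈ Set.Ioo (0 : ℝ) 1, triDGA u θ = y)
    ∧ (y ^ 2 ≤ u → u < y →
        ∀ θ ∈ Set.Ioo (0 : ℝ) 1, (triDGA u θ = y ↔ θ = y ^ 2 / u))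
    ∧ (y ≤ u → u ≤ 1 - (1 - y) ^ 2 →
        ∀ θ ∈ Set.Ioo (0 : ℝ) 1, (triDGA u θ = y ↔ θ = 1 - (1 - y) ^ 2 / (1 - u)))
    ∧ (1 - (1 - y) ^ 2 < u → ¬ ∃ θ ∈ Set.Ioo (0 : ℝ) 1, triDGA u θ = y) := by
  obtain ⟨hy0, hy1⟩ := hy
  obtain ⟨hu0, hu1⟩ := hu
  simp only [triDGA_eq_iff hu0 hu1 hy0.le hy1.le]
  refine ⟨?_, ?_, ?_, ?_⟩
  · rintro h ⟨θ, ⟨-, hθ1⟩, ⟨-, rfl⟩ | ⟨hyu, -⟩⟩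
    · rw [div_lt_one hu0] at hθ1
      linarith
    · nlinarith
  · intro _ h θ _
    simp [h.le, not_lt.2 h.le]
  · intro h _ θ _
    rcases h.eq_or_lt with rfl | hyu
    · have hy1' : 1 - y ≠ 0 := by linarith
      have h_left : y ^ 2 / y = y := by field_simp
      have h_right : 1 - (1 - y) ^ 2 / (1 - y) = y := by field_simp; ring
      simp [h_left, h_right]
    · simp [hyu, hyu.not_ge]
  · rintro h ⟨θ, ⟨hθ0, -⟩, ⟨huy, -⟩ | ⟨-, rfl⟩⟩
    · nlinarith
    · rw [sub_pos, div_lt_one (by linarith)] at hθ0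
      linarith
end

section
/- Let θ ∈ (0,1) and let Y₁, Y₂, … be independent, identically distributed random variables with the triangular distribution with parameter θ. Then the Jacobian function evaluated at the sample satisfies J((Y₁,…,Yₙ), θ) → √(1/8) almost surely as n → ∞. -/
open MeasureTheory Set Filter

/-- The triangular distribution with parameter θ, as a measure on ℝ. -/
noncomputable def triMeasure (θ : ℝ) : Measure ℝ :=
  volume.withDensity fun y => ENNReal.ofReal (triDensity θ y)

/-- Jacobian function of the triangular generalized fiducial distribution for a
sample `y₁,…,yₙ`. -/
noncomputable def triJacobian (n : ℕ) (y : ℕ → ℝ) (θ : ℝ) : ℝ :=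
  Real.sqrt ((1 / (n : ℝ)) * ∑ i ∈ Finset.range n,
      (y i / (2 * θ)) ^ 2 * Set.indicator (Set.Ioc 0 θ) 1 (y i)
    + (1 / (n : ℝ)) * ∑ i ∈ Finset.range n,
      ((1 - y i) / (2 * (1 - θ))) ^ 2 * Set.indicator (Set.Ioo θ 1) 1 (y i))

/-! The squared Jacobian is the sample mean of `g(Yᵢ)` for the bounded function
`g(y) = (y/2θ)² 1_{(0,θ]}(y) + ((1-y)/2(1-θ))² 1_{(θ,1)}(y)`, so by the strong law of large numbers
it converges almost surely to `E g(Y₁) = ∫₀^θ y³/(2θ³) dy + ∫_θ^1 (1-y)³/(2(1-θ)³) dy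
= θ/8 + (1-θ)/8 = 1/8`; continuity of the square root finishes the proof. -/

open ProbabilityTheory Finset in
theorem strong_law_ae_comp {Ω α : Type*} [MeasurableSpace Ω]
    [MeasurableSpace α] {μ : Measure Ω} {ν : Measure α} {Y : ℕ → Ω → α}
    (hY : ∀ i, AEMeasurable (Y i) μ) (hindep : Pairwise fun i j => IndepFun (Y i) (Y j) μ)
    (hlaw : ∀ i, μ.map (Y i) = ν) {g : α → ℝ} (hg : Measurable g) (hint : Integrable g ν) :
    ∀ᵐ ω ∂μ, Tendsto (fun n : ℕ => (∑ i ∈ range n, g (Y i ω)) / n) atTop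
      (nhds (∫ y, g y ∂ν)) := by
  have hident : ∀ i, IdentDistrib (g ∘ Y i) (g ∘ Y 0) μ μ := fun i =>
    (IdentDistrib.mk (hY i) (hY 0) (by rw [hlaw i, hlaw 0])).comp hg
  have hint0 : Integrable (g ∘ Y 0) μ :=
    (integrable_map_measure hg.aestronglyMeasurable (hY 0)).1 (hlaw 0 ▸ hint)
  have hmean : ∫ ω, g (Y 0 ω) ∂μ = ∫ y, g y ∂ν := by
    rw [← hlaw 0, integral_map (hY 0) hg.aestronglyMeasurable]
  simpa only [Function.comp_apply, hmean] using strong_law_ae_real (fun i => g ∘ Y i) hint0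
    (fun i j hij => (hindep hij).comp hg hg) hident

theorem sq_div_two_mul_le {a b : ℝ} (ha : 0 ≤ a) (hab : a ≤ b) : (a / (2 * b)) ^ 2 ≤ 1 / 4 := by
  rcases ha.eq_or_lt with rfl | ha
  · norm_num
  have h : a / (2 * b) ≤ 1 / 2 := by
    rw [div_le_iff₀ (by linarith)]
    linarith
  nlinarith [div_nonneg ha.le (by linarith : (0 : ℝ) ≤ 2 * b)]

theorem triDensity_nonneg_s7 (θ y : ℝ) : 0 ≤ triDensity θ y := by
  unfold triDensity
  refine add_nonneg (Set.indicator_nonneg (fun x hx => ?_) y)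
    (Set.indicator_nonneg (fun x hx => ?_) y)
  · exact div_nonneg (by linarith [hx.1]) (hx.1.trans_le hx.2).le
  · exact div_nonneg (by linarith [hx.2]) (by linarith [hx.1, hx.2])

theorem integral_triMeasure (θ : ℝ) (g : ℝ → ℝ) :
    ∫ y, g y ∂triMeasure θ = ∫ y, triDensity θ y * g y := by
  have hmeas : Measurable (triDensity θ) := by
    unfold triDensity
    fun_prop (disch := measurability)
  calc ∫ y, g y ∂triMeasure θ = ∫ y, (triDensity θ y).toNNReal • g y :=
        integral_withDensity_eq_integral_smul hmeas.real_toNNReal g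
    _ = ∫ y, triDensity θ y * g y := by
        congr with y
        rw [NNReal.smul_def, Real.coe_toNNReal _ (triDensity_nonneg_s7 θ y), smul_eq_mul]

noncomputable def triJacobianTerm (θ y : ℝ) : ℝ :=
  (y / (2 * θ)) ^ 2 * Set.indicator (Set.Ioc 0 θ) 1 y
    + ((1 - y) / (2 * (1 - θ))) ^ 2 * Set.indicator (Set.Ioo θ 1) 1 y

theorem triJacobian_eq_sqrt_average (n : ℕ) (y : ℕ → ℝ) (θ : ℝ) :
    triJacobian n y θ = Real.sqrt ((∑ i ∈ Finset.range n, triJacobianTerm θ (y i)) / n) := by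
  simp only [triJacobian, triJacobianTerm, Finset.sum_add_distrib]
  congr 1
  ring

theorem measurable_triJacobianTerm (θ : ℝ) : Measurable (triJacobianTerm θ) := by
  unfold triJacobianTerm
  fun_prop (disch := measurability)

theorem triJacobianTerm_mem_Icc (θ y : ℝ) : triJacobianTerm θ y ∈ Set.Icc 0 (1 / 2) := by
  have h₁ : (y / (2 * θ)) ^ 2 * Set.indicator (Set.Ioc 0 θ) 1 y ∈ Set.Icc (0 : ℝ) (1 / 4) := by
    by_cases h : y ∈ Set.Ioc 0 θ
    · rw [indicator_of_mem h, Pi.one_apply, mul_one]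
      exact ⟨sq_nonneg _, sq_div_two_mul_le h.1.le h.2⟩
    · simp [h]
  have h₂ : ((1 - y) / (2 * (1 - θ))) ^ 2 * Set.indicator (Set.Ioo θ 1) 1 y
      ∈ Set.Icc (0 : ℝ) (1 / 4) := by
    by_cases h : y ∈ Set.Ioo θ 1
    · rw [indicator_of_mem h, Pi.one_apply, mul_one]
      exact ⟨sq_nonneg _, sq_div_two_mul_le (by linarith [h.2]) (by linarith [h.1])⟩
    · simp [h]
  constructor <;> unfold triJacobianTerm <;> linarith [h₁.1, h₁.2, h₂.1, h₂.2]

theorem triDensity_mul_triJacobianTerm (θ y : ℝ) :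
    triDensity θ y * triJacobianTerm θ y
      = Set.indicator (Set.Ioc 0 θ) (fun y => y ^ 3 / (2 * θ ^ 3)) y
        + Set.indicator (Set.Ioo θ 1) (fun y => (1 - y) ^ 3 / (2 * (1 - θ) ^ 3)) y := by
  simp only [triDensity, triJacobianTerm, indicator_apply, Pi.one_apply]
  split_ifs with h₁ h₂ h₂
  · exact absurd (h₁.2.trans_lt h₂.1) (lt_irrefl y)
  · have : θ ≠ 0 := (h₁.1.trans_le h₁.2).ne'
    field_simp
    ring
  · have : 1 - θ ≠ 0 := by linarith [h₂.1, h₂.2]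
    field_simp
    ring
  · simp

theorem integral_triJacobianTerm {θ : ℝ} (hθ : θ ∈ Set.Ioo (0 : ℝ) 1) :
    ∫ y, triJacobianTerm θ y ∂triMeasure θ = 1 / 8 := by
  obtain ⟨hθ₀, hθ₁⟩ := hθ
  have hleft : ∫ y in (0 : ℝ)..θ, y ^ 3 / (2 * θ ^ 3) = θ / 8 := by
    rw [intervalIntegral.integral_div, integral_pow]
    field_simp
    ring
  have hright : ∫ y in θ..1, (1 - y) ^ 3 / (2 * (1 - θ) ^ 3) = (1 - θ) / 8 := by
    rw [intervalIntegral.integral_div, intervalIntegral.integral_comp_sub_left (· ^ 3),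
      integral_pow]
    have : 1 - θ ≠ 0 := by linarith
    field_simp
    ring
  have hint_left : Integrable (Set.indicator (Set.Ioc 0 θ) fun y : ℝ => y ^ 3 / (2 * θ ^ 3)) := by
    rw [integrable_indicator_iff measurableSet_Ioc]
    exact (continuous_pow 3 |>.div_const _).integrableOn_Ioc
  have hint_right : Integrable
      (Set.indicator (Set.Ioo θ 1) fun y : ℝ => (1 - y) ^ 3 / (2 * (1 - θ) ^ 3)) := by
    rw [integrable_indicator_iff measurableSet_Ioo]
    exact (by fun_prop : Continuous fun y : ℝ => (1 - y) ^ 3 / (2 * (1 - θ) ^ 3))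
      |>.integrableOn_Ioc.mono_set Set.Ioo_subset_Ioc_self
  rw [integral_triMeasure]
  simp only [triDensity_mul_triJacobianTerm]
  rw [integral_add hint_left hint_right, integral_indicator measurableSet_Ioc,
    integral_indicator measurableSet_Ioo, ← integral_Ioc_eq_integral_Ioo,
    ← intervalIntegral.integral_of_le hθ₀.le, ← intervalIntegral.integral_of_le hθ₁.le,
    hleft, hright]
  ring

/-- For i.i.d. triangular observations, the Jacobian function evaluated at the sample
converges almost surely to `√(1/8)`. -/
theorem triangular_jacobian_as_limit
    {Ω : Type*} [MeasurableSpace Ω] (μ : Measure Ω) [IsProbabilityMeasure μ]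
    (θ : ℝ) (hθ : θ ∈ Set.Ioo (0 : ℝ) 1)
    (Y : ℕ → Ω → ℝ) (hmeas : ∀ i, Measurable (Y i))
    (hindep : ProbabilityTheory.iIndepFun Y μ)
    (hlaw : ∀ i, Measure.map (Y i) μ = triMeasure θ) :
    ∀ᵐ ω ∂μ, Tendsto (fun n => triJacobian n (fun i => Y i ω) θ)
      atTop (nhds (Real.sqrt (1 / 8))) := by
  have : IsProbabilityMeasure (triMeasure θ) :=
    hlaw 0 ▸ Measure.isProbabilityMeasure_map (hmeas 0).aemeasurable
  have hint : Integrable (triJacobianTerm θ) (triMeasure θ) :=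
    .of_mem_Icc 0 (1 / 2) (measurable_triJacobianTerm θ).aemeasurable
      (ae_of_all _ (triJacobianTerm_mem_Icc θ))
  have hmean := strong_law_ae_comp (fun i => (hmeas i).aemeasurable)
    (fun _ _ hij => hindep.indepFun hij) hlaw (measurable_triJacobianTerm θ) hint
  rw [integral_triJacobianTerm hθ] at hmean
  filter_upwards [hmean] with ω hω
  simpa only [triJacobian_eq_sqrt_average, Function.comp_def] using
    (Real.continuous_sqrt.tendsto _).comp hω
end

section
/- Let p ≥ 1, let a < b be reals, and let a < t₁ < t₂ < ⋯ < t_κ < b. Then the functions on [a,b] given by 1, x, …, x^p, (x−t₁)₊^p, …, (x−t_κ)₊^p, (x−t₁)₊^{p−1}, …, (x−t_κ)₊^{p−1} are linearly independent (as elements of the real vector space of functions on [a,b]); consequently, the free-knot spline Fisher information matrix I(η) = XᵀX built from these functions evaluated at design points is nonsingular whenever the design points make the columns of X linearly independent, which requires the knots t_j to be distinct and the coefficients α_{p+j} multiplying the knot derivatives to be nonzero. -/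
/-!
Between consecutive knots every function of the family is a polynomial, so a linear relation
vanishing on `[a, b]` makes each of these polynomial pieces vanish (a nonzero polynomial has
finitely many roots). Just left and just right of a knot `τ` the pieces differ exactly by
`A (X - τ)^p + B (X - τ)^(p-1)`, whose vanishing forces `A = B = 0` since `p ≥ 1`; the piece just
right of `a` is the polynomial part itself. The Gram matrix `XᵀX` is positive definite once the
columns of `X` are independent.
-/

open Matrix Polynomial Filter Topology Set

theorem Polynomial.eq_zero_of_eventually_isRoot {R : Type*} [CommRing R] [IsDomain R]
    {P : R[X]} {l : Filter R} [l.NeBot] (hl : l ≤ cofinite) (h : ∀ᶠ x in l, P.IsRoot x) :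
    P = 0 := by
  by_contra hP
  obtain ⟨x, hx, hnx⟩ := (h.and ((eventually_cofinite_not_isRoot hP).filter_mono hl)).exists
  exact hnx hx

section KnotCrossing

variable {α : Type*} [TopologicalSpace α] [LinearOrder α] [OrderClosedTopology α]

theorem eventually_nhdsLT_lt_iff (s τ : α) : ∀ᶠ y in 𝓝[<] τ, s < y ↔ s < τ := by
  rcases lt_or_ge s τ with hs | hs
  · filter_upwards [nhdsWithin_le_nhds (eventually_gt_nhds hs)] with y hy
    exact iff_of_true hy hs
  · filter_upwards [self_mem_nhdsWithin] with y (hy : y < τ)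
    exact iff_of_false (fun h => (h.trans hy).not_ge hs) hs.not_gt

theorem eventually_nhdsGT_lt_iff (s τ : α) : ∀ᶠ y in 𝓝[>] τ, s < y ↔ s ≤ τ := by
  rcases le_or_gt s τ with hs | hs
  · filter_upwards [self_mem_nhdsWithin] with y (hy : τ < y)
    exact iff_of_true (hs.trans_lt hy) hs
  · filter_upwards [nhdsWithin_le_nhds (eventually_lt_nhds hs)] with y hy
    exact iff_of_false hy.not_gt hs.not_ge

end KnotCrossing

theorem Matrix.det_transpose_mul_self_ne_zero {m n : Type*} [Fintype m] [Fintype n]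
    [DecidableEq n] (X : Matrix m n ℝ) (hX : LinearIndependent ℝ X.col) :
    (Xᵀ * X).det ≠ 0 := by
  have hpos := (PosDef.conjTranspose_mul_self X (mulVec_injective_iff.2 hX)).det_pos
  rw [conjTranspose_eq_transpose_of_trivial] at hpos
  exact hpos.ne'

noncomputable section

def knotTerm (p : ℕ) (τ A B : ℝ) : ℝ[X] :=
  C A * (X - C τ) ^ p + C B * (X - C τ) ^ (p - 1)

theorem knotTerm_eq_zero {p : ℕ} (hp : 1 ≤ p) {τ A B : ℝ} (h : knotTerm p τ A B = 0) :
    A = 0 ∧ B = 0 := by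
  -- Recentre at `τ`, then read off the coefficients of `X^p` and `X^(p-1)`.
  have hshift := congrArg (·.comp (X + C τ)) h
  simp only [knotTerm, add_comp, mul_comp, pow_comp, sub_comp, X_comp, C_comp, zero_comp,
    add_sub_cancel_right] at hshift
  have hA := congrArg (·.coeff p) hshift
  have hB := congrArg (·.coeff (p - 1)) hshift
  simp only [coeff_add, coeff_C_mul, coeff_X_pow, coeff_zero] at hA hB
  rw [if_pos trivial, if_neg (by omega)] at hA
  rw [if_pos trivial, if_neg (by omega)] at hB
  constructor <;> linarith

theorem mul_max_pow_add_mul_ite_eq {p : ℕ} (hp : 1 ≤ p) (τ A B x : ℝ) :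
    A * max (x - τ) 0 ^ p + B * (if τ < x then (x - τ) ^ (p - 1) else 0) =
      if τ < x then (knotTerm p τ A B).eval x else 0 := by
  split_ifs with hτ
  · simp [knotTerm, max_eq_left (sub_nonneg.2 hτ.le)]
  · simp [max_eq_right (sub_nonpos.2 (not_lt.1 hτ)), zero_pow (by omega : p ≠ 0)]

variable {ι : Type*} (p : ℕ) (a b : ℝ) (t : ι → ℝ)

def truncatedPowerFamily : Fin (p + 1) ⊕ ι ⊕ ι → Icc a b → ℝ :=
  fun idx x =>
    Sum.elim (fun j : Fin (p + 1) => (x : ℝ) ^ (j : ℕ))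
      (Sum.elim (fun k : ι => (max ((x : ℝ) - t k) 0) ^ p)
        (fun k : ι => if t k < (x : ℝ) then ((x : ℝ) - t k) ^ (p - 1) else 0))
      idx

/-- The polynomial that a combination with coefficients `c` of `truncatedPowerFamily` equals
between knots, when `S` is the set of knots to the left. -/
def splinePiece (c : Fin (p + 1) ⊕ ι ⊕ ι → ℝ) (S : Finset ι) : ℝ[X] :=
  ∑ j : Fin (p + 1), monomial j (c (.inl j)) +
    ∑ i ∈ S, knotTerm p (t i) (c (.inr (.inl i))) (c (.inr (.inr i)))

variable {p a b t}

theorem splinePiece_insert (c : Fin (p + 1) ⊕ ι ⊕ ι → ℝ) {S : Finset ι} {k : ι} [DecidableEq ι]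
    (hk : k ∉ S) :
    splinePiece p t c (insert k S) =
      splinePiece p t c S + knotTerm p (t k) (c (.inr (.inl k))) (c (.inr (.inr k))) := by
  rw [splinePiece, splinePiece, Finset.sum_insert hk]
  ring

theorem sum_smul_truncatedPowerFamily_apply [Fintype ι] (hp : 1 ≤ p)
    (c : Fin (p + 1) ⊕ ι ⊕ ι → ℝ) (x : Icc a b) :
    (∑ idx, c idx • truncatedPowerFamily p a b t idx) x =
      (splinePiece p t c {i | t i < x}).eval (x : ℝ) := by
  simp only [Finset.sum_apply, Pi.smul_apply, smul_eq_mul, Fintype.sum_sum_type,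
    truncatedPowerFamily, Sum.elim_inl, Sum.elim_inr, splinePiece, eval_add, eval_finsetSum,
    eval_monomial, Finset.sum_filter, ← Finset.sum_add_distrib, mul_max_pow_add_mul_ite_eq hp,
    apply_ite (eval (x : ℝ)), eval_zero]

theorem splinePiece_eq_zero_of_eventually [Fintype ι] (hp : 1 ≤ p)
    {c : Fin (p + 1) ⊕ ι ⊕ ι → ℝ} (hc : ∑ idx, c idx • truncatedPowerFamily p a b t idx = 0)
    {l : Filter ℝ} [l.NeBot] (hl : l ≤ cofinite) {S : Finset ι}
    (hS : ∀ᶠ y in l, y ∈ Icc a b ∧ ∀ i, t i < y ↔ i ∈ S) :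
    splinePiece p t c S = 0 := by
  refine eq_zero_of_eventually_isRoot hl (hS.mono fun y ⟨hy, hSy⟩ => ?_)
  have hknots : ({i | t i < y} : Finset ι) = S := by
    ext i
    simp [hSy]
  have hzero := congrFun hc ⟨y, hy⟩
  rwa [sum_smul_truncatedPowerFamily_apply hp, hknots] at hzero

theorem linearIndependent_truncatedPowerFamily [Fintype ι] (hp : 1 ≤ p) (hab : a < b)
    (ht : Function.Injective t) (hta : ∀ k, a < t k) (htb : ∀ k, t k < b) :
    LinearIndependent ℝ (truncatedPowerFamily p a b t) := by
  classical
  rw [Fintype.linearIndependent_iff]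
  intro c hc
  have hl : ∀ τ : ℝ, 𝓝[<] τ ≤ cofinite ∧ 𝓝[>] τ ≤ cofinite := fun τ =>
    ⟨(nhdsLT_le_nhdsNE τ).trans (nhdsNE_le_cofinite τ),
      (nhdsGT_le_nhdsNE τ).trans (nhdsNE_le_cofinite τ)⟩
  have hpoly : splinePiece p t c ∅ = 0 := by
    refine splinePiece_eq_zero_of_eventually hp hc (hl a).2 ?_
    filter_upwards [Icc_mem_nhdsGT_of_mem ⟨le_rfl, hab⟩,
      eventually_all.2 fun i => eventually_nhdsGT_lt_iff (t i) a] with y hy hlt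
    exact ⟨hy, fun i => by simpa [(hta i).not_ge] using hlt i⟩
  have hknot : ∀ k, knotTerm p (t k) (c (.inr (.inl k))) (c (.inr (.inr k))) = 0 := by
    intro k
    set S : Finset ι := {i | t i < t k}
    have hleft : splinePiece p t c S = 0 := by
      refine splinePiece_eq_zero_of_eventually hp hc (hl (t k)).1 ?_
      filter_upwards [Icc_mem_nhdsLT_of_mem ⟨hta k, (htb k).le⟩,
        eventually_all.2 fun i => eventually_nhdsLT_lt_iff (t i) (t k)] with y hy hlt
      exact ⟨hy, fun i => by simpa [S] using hlt i⟩
    have hright : splinePiece p t c (insert k S) = 0 := by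
      refine splinePiece_eq_zero_of_eventually hp hc (hl (t k)).2 ?_
      filter_upwards [Icc_mem_nhdsGT_of_mem ⟨(hta k).le, htb k⟩,
        eventually_all.2 fun i => eventually_nhdsGT_lt_iff (t i) (t k)] with y hy hlt
      exact ⟨hy, fun i => by simpa [S, le_iff_lt_or_eq, ht.eq_iff, or_comm] using hlt i⟩
    rwa [splinePiece_insert c (by simp [S]), hleft, zero_add] at hright
  rintro (j | k | k)
  · simpa [splinePiece, finsetSum_coeff, coeff_monomial, Fin.val_eq_val] using
      congrArg (·.coeff j) hpoly
  · exact (knotTerm_eq_zero hp (hknot k)).1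
  · exact (knotTerm_eq_zero hp (hknot k)).2

end

/-- The truncated power functions `1, x, …, x^p, (x−t₁)₊^p, …, (x−t_κ)₊^p,
(x−t₁)₊^{p−1}, …, (x−t_κ)₊^{p−1}` (with the convention `(u)₊^0 = 1_{u>0}`) are
linearly independent as functions on `[a,b]`; consequently, a Gram matrix `XᵀX`
built from linearly independent columns is nonsingular. -/
theorem freeKnotSpline_basis_linearIndependent
    (p : ℕ) (hp : 1 ≤ p) (a b : ℝ) (hab : a < b) (κ : ℕ) (t : Fin κ → ℝ)
    (ht : StrictMono t) (hta : ∀ k, a < t k) (htb : ∀ k, t k < b) :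
    LinearIndependent ℝ (fun idx : Fin (p + 1) ⊕ Fin κ ⊕ Fin κ =>
      (fun x : Set.Icc a b =>
        Sum.elim (fun j : Fin (p + 1) => (x : ℝ) ^ (j : ℕ))
          (Sum.elim (fun k : Fin κ => (max ((x : ℝ) - t k) 0) ^ p)
            (fun k : Fin κ => if t k < (x : ℝ) then ((x : ℝ) - t k) ^ (p - 1) else 0))
          idx))
    ∧ ∀ (n m : ℕ) (X : Matrix (Fin n) (Fin m) ℝ),
        LinearIndependent ℝ (fun j : Fin m => fun i : Fin n => X i j) →
        (X.transpose * X).det ≠ 0 :=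
  ⟨linearIndependent_truncatedPowerFamily hp hab ht.injective hta htb,
    fun _ _ X hX => X.det_transpose_mul_self_ne_zero hX⟩
end
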